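/- arXiv:math/0405138 — 5 statements merged into one kernel-verified Lean document; each statement's English description precedes it below -/
import Mathlib

section
/- For fixed integers λ ≥ 0, n ≥ 2, prime power P = p^r, the limit as q → 0⁺ of the one-variable q-beta weight dS^q(q^λ; a, b) = [(a;q)_∞/(ab;q)_∞]·[(b;q)_λ/(q;q)_λ]·a^λ with a = P^{-(n-1)} and b = P^{-1} equals (1 − P^{-(n-1)})/(1 − P^{-n}) when λ = 0, and (1 − P^{-1})(1 − P^{-(n-1)})/(1 − P^{-n}) · P^{-(n-1)λ} when λ ≥ 1. -/
open Filter

/-- The infinite q-Pochhammer symbol `(x;q)_∞ = ∏_{i≥0} (1 - q^i x)`. -/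
noncomputable def qPochInf (x q : ℝ) : ℝ := ∏' i : ℕ, (1 - q ^ i * x)

/-- The finite q-Pochhammer symbol `(x;q)_λ = ∏_{i=0}^{λ-1} (1 - q^i x)`. -/
noncomputable def qPoch (x q : ℝ) (l : ℕ) : ℝ := ∏ i ∈ Finset.range l, (1 - q ^ i * x)

/-- The q-beta weight `dS^q(q^λ;a,b) = [(a;q)_∞/(ab;q)_∞]·[(b;q)_λ/(q;q)_λ]·a^λ`. -/
noncomputable def qBetaWeight (q a b : ℝ) (l : ℕ) : ℝ :=
  qPochInf a q / qPochInf (a * b) q * (qPoch b q l / qPoch q q l) * a ^ l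

/-! The weight is continuous at `q = 0`: the finite q-Pochhammer symbols are polynomials in `q`,
and the infinite ones converge locally uniformly on `|q| < 1` by the M-test against `|x| rⁱ`.
At `q = 0` one has `(x;0)_∞ = 1 - x`, `(b;0)_λ = 1 - b` for `λ ≥ 1` and `(0;0)_λ = 1`, so the
limit is `(1 - a)/(1 - ab) · (b;0)_λ · a^λ`, where `1 - ab = 1 - P^{-n} ≠ 0` because `P > 1`. -/

open Metric in
theorem continuousAt_qPochInf (x : ℝ) {q : ℝ} (hq : |q| < 1) : ContinuousAt (qPochInf x) q := by
  obtain ⟨r, hqr, hr⟩ := exists_between hq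
  have hbound : ∀ n, ∀ t ∈ ball (0 : ℝ) r, ‖-(t ^ n * x)‖ ≤ |x| * r ^ n := by
    intro n t ht
    rw [mem_ball_zero_iff] at ht
    rw [norm_neg, norm_mul, norm_pow, Real.norm_eq_abs x, mul_comm]
    gcongr
  have hprod : HasProdLocallyUniformlyOn (fun n t ↦ 1 - t ^ n * x) (qPochInf x) (ball 0 r) := by
    have := Summable.hasProdLocallyUniformlyOn_nat_one_add isOpen_ball
      ((summable_geometric_of_lt_one ((abs_nonneg q).trans hqr.le) hr).mul_left |x|)
      (.of_forall hbound) (fun n ↦ by fun_prop)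
    simp only [← sub_eq_add_neg] at this
    exact this
  refine (hprod.tendstoLocallyUniformlyOn_finsetRange.continuousOn
    (.of_forall fun N ↦ by fun_prop)).continuousAt (isOpen_ball.mem_nhds ?_)
  rwa [mem_ball_zero_iff]

theorem qPochInf_zero_base (x : ℝ) : qPochInf x 0 = 1 - x := by
  rw [qPochInf, tprod_eq_mulSingle 0 fun i hi ↦ by simp [hi]]
  simp

theorem qPoch_zero_base (x : ℝ) (l : ℕ) : qPoch x 0 l = if l = 0 then 1 else 1 - x := by
  cases l with
  | zero => simp [qPoch]
  | succ m => simp [qPoch, Finset.prod_range_succ']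

theorem continuous_qPoch (l : ℕ) : Continuous fun p : ℝ × ℝ ↦ qPoch p.1 p.2 l := by
  unfold qPoch
  fun_prop

theorem continuousAt_qBetaWeight_zero {a b : ℝ} (hab : a * b ≠ 1) (l : ℕ) :
    ContinuousAt (fun q ↦ qBetaWeight q a b l) 0 := by
  have h0 : |(0 : ℝ)| < 1 := by simp
  have hden : qPochInf (a * b) 0 ≠ 0 := by
    rw [qPochInf_zero_base, sub_ne_zero]
    exact hab.symm
  have hb : Continuous fun q ↦ qPoch b q l :=
    (continuous_qPoch l).comp (continuous_const.prodMk continuous_id)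
  have hqq : Continuous fun q ↦ qPoch q q l :=
    (continuous_qPoch l).comp (continuous_id.prodMk continuous_id)
  have hq0 : qPoch 0 0 l ≠ 0 := by simp [qPoch]
  exact (((continuousAt_qPochInf a h0).div (continuousAt_qPochInf (a * b) h0) hden).mul
    (hb.continuousAt.div hqq.continuousAt hq0)).mul continuousAt_const

theorem qBetaWeight_zero_base (a b : ℝ) (l : ℕ) :
    qBetaWeight 0 a b l = (1 - a) / (1 - a * b) * (if l = 0 then 1 else 1 - b) * a ^ l := by
  simp [qBetaWeight, qPochInf_zero_base, qPoch_zero_base]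

/-- As `q → 0⁺`, the q-beta weight with `a = P^{-(n-1)}`, `b = P^{-1}` (for a prime power
`P = p^r`) tends to the non-Archimedean measure: `(1-P^{-(n-1)})/(1-P^{-n})` for `λ = 0` and
`(1-P^{-1})(1-P^{-(n-1)})/(1-P^{-n})·P^{-(n-1)λ}` for `λ ≥ 1`. -/
theorem stmt8 (p r : ℕ) (hp : p.Prime) (hr : 1 ≤ r) (P : ℝ) (hP : P = (p : ℝ) ^ r)
    (n : ℕ) (hn : 2 ≤ n) (l : ℕ) :
    Tendsto (fun q : ℝ => qBetaWeight q (P⁻¹ ^ (n - 1)) P⁻¹ l)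
      (nhdsWithin 0 (Set.Ioi 0))
      (nhds (if l = 0 then (1 - P⁻¹ ^ (n - 1)) / (1 - P⁻¹ ^ n)
        else (1 - P⁻¹) * (1 - P⁻¹ ^ (n - 1)) / (1 - P⁻¹ ^ n) * (P⁻¹ ^ (n - 1)) ^ l)) := by
  have hP1 : 1 < P := hP ▸ one_lt_pow₀ (by exact_mod_cast hp.one_lt) (by omega)
  have hab : P⁻¹ ^ (n - 1) * P⁻¹ = P⁻¹ ^ n := by
    rw [← pow_succ, Nat.sub_add_cancel (by omega)]
  have hne : P⁻¹ ^ (n - 1) * P⁻¹ ≠ 1 :=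
    hab ▸ (pow_lt_one₀ (by positivity) (inv_lt_one_of_one_lt₀ hP1) (by omega)).ne
  have hlim := (continuousAt_qBetaWeight_zero hne l).tendsto.mono_left
    (nhdsWithin_le_nhds (s := Set.Ioi 0))
  rw [qBetaWeight_zero_base, hab] at hlim
  convert hlim using 2
  split_ifs with hl
  · simp [hl]
  · ring
end

section
/- In the one-dimensional non-Archimedean Hecke algebra, the functions e_0 = 1 and, for λ ≥ 1, e_λ(p^{-ν}) = N_λ·1_{ν ≥ λ} − N_{λ-1}·1_{ν ≥ λ-1} (where N_λ = |P^{n-1}_{O/℘^λ}|) are orthogonal with respect to the measure dh: for all λ ≠ μ, ∑_{ν=0}^∞ e_λ(p^{-ν})·e_μ(p^{-ν})·dh(ν) = 0, where dh(0) = (1 − P^{-(n-1)})/(1 − P^{-n}) and dh(ν) = (1 − P^{-1})(1 − P^{-(n-1)})/(1 − P^{-n}) · P^{-(n-1)ν} for ν ≥ 1. -/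
/-- `N_λ = |P^{n-1}_{O/℘^λ}|`: `N_0 = 1` and `N_λ = (1-P^{-n})/(1-P^{-1})·P^{(n-1)λ}`. -/
noncomputable def Nproj (P : ℝ) (n l : ℕ) : ℝ :=
  if l = 0 then 1 else (1 - P⁻¹ ^ n) / (1 - P⁻¹) * (P ^ (n - 1)) ^ l

/-- The minimal idempotent `e_λ(p^{-ν}) = N_λ 1_{ν≥λ} - N_{λ-1} 1_{ν≥λ-1}` (λ ≥ 1),
`e_0 ≡ 1`. -/
noncomputable def eIdem (P : ℝ) (n l ν : ℕ) : ℝ :=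
  if l = 0 then 1
  else (if l ≤ ν then Nproj P n l else 0) - (if l - 1 ≤ ν then Nproj P n (l - 1) else 0)

/-- The projected Haar measure: `dh(0) = (1-P^{-(n-1)})/(1-P^{-n})` and
`dh(ν) = (1-P^{-1})(1-P^{-(n-1)})/(1-P^{-n})·P^{-(n-1)ν}` for `ν ≥ 1`. -/
noncomputable def dhMeas (P : ℝ) (n ν : ℕ) : ℝ :=
  if ν = 0 then (1 - P⁻¹ ^ (n - 1)) / (1 - P⁻¹ ^ n)
  else (1 - P⁻¹) * (1 - P⁻¹ ^ (n - 1)) / (1 - P⁻¹ ^ n) * (P⁻¹ ^ (n - 1)) ^ ν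

lemma alg13 (x q A : ℝ) (hx : 1 - x ≠ 0) (hq1 : 1 - q ≠ 0) (hxq : 1 - x*q ≠ 0)
    (hq : q ≠ 0) (hA : A ≠ 0) :
    (0 - (1 - x * q) / (1 - x) * A⁻¹) * ((1 - x) * (1 - q) / (1 - x * q) * A) +
      ((1 - x * q) / (1 - x) * (A⁻¹ * q⁻¹) - (1 - x * q) / (1 - x) * A⁻¹) *
          ((1 - x) * (1 - q) / (1 - x * q) * (A * q)) * (1 - q)⁻¹ = 0 := by
  field_simp
  ring

lemma alg13b (x q : ℝ) (hx : 1 - x ≠ 0) (hq1 : 1 - q ≠ 0) (hxq : 1 - x * q ≠ 0)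
    (hq : q ≠ 0) :
    (0 - 1) * ((1 - q) / (1 - x * q)) +
      ((1 - x * q) / (1 - x) * q⁻¹ - 1) * ((1 - x) * (1 - q) / (1 - x * q) * q) * (1 - q)⁻¹
      = 0 := by
  field_simp
  ring

lemma key13 (P : ℝ) (hP : 1 < P) (n : ℕ) (hn : 2 ≤ n) (mu : ℕ) (hmu : 1 ≤ mu) :
    ∑' ν : ℕ, eIdem P n mu ν * dhMeas P n ν = 0 := by
  have hP0 : (0:ℝ) < P := lt_trans one_pos hP
  have hx0 : (0:ℝ) < P⁻¹ := inv_pos.mpr hP0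
  have hx1 : P⁻¹ < 1 := inv_lt_one_of_one_lt₀ hP
  set q : ℝ := P⁻¹ ^ (n-1) with hq
  have hq0 : (0:ℝ) < q := pow_pos hx0 _
  have hq1 : q < 1 := pow_lt_one₀ hx0.le hx1 (by omega)
  have hPn : P⁻¹ ^ n = P⁻¹ * q := by
    rw [hq, ← pow_succ']; congr 1; omega
  have hPn1 : P⁻¹ ^ n < 1 := pow_lt_one₀ hx0.le hx1 (by omega)
  clear_value q
  have hshift : ∀ i : ℕ, eIdem P n mu (i + mu) * dhMeas P n (i + mu)
      = ((Nproj P n mu - Nproj P n (mu-1)) *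
          ((1 - P⁻¹) * (1 - q) / (1 - P⁻¹ ^ n) * q ^ mu)) * q ^ i := by
    intro i
    simp only [eIdem, dhMeas, if_neg (by omega : ¬ mu = 0), if_neg (by omega : ¬ i + mu = 0),
      if_pos (by omega : mu ≤ i + mu), if_pos (by omega : mu - 1 ≤ i + mu), ← hq]
    rw [pow_add]
    ring
  have hgeo : Summable (fun i : ℕ => q ^ i) := summable_geometric_of_lt_one hq0.le hq1
  have hs : Summable (fun i : ℕ => eIdem P n mu (i + mu) * dhMeas P n (i + mu)) := by
    simp only [hshift]
    exact hgeo.mul_left _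
  have hS : Summable (fun ν : ℕ => eIdem P n mu ν * dhMeas P n ν) :=
    (summable_nat_add_iff mu).mp hs
  rw [← Summable.sum_add_tsum_nat_add mu hS]
  rw [tsum_congr hshift, tsum_mul_left, tsum_geometric_of_lt_one hq0.le hq1]
  rw [Finset.sum_eq_single_of_mem (mu-1) (Finset.mem_range.mpr (by omega))]
  · have h1 : ¬ mu ≤ mu - 1 := by omega
    have h2 : mu - 1 ≤ mu - 1 := le_refl _
    have hne1 : (1:ℝ) - P⁻¹ ≠ 0 := by nlinarith
    have hne2 : (1:ℝ) - q ≠ 0 := by nlinarith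
    have hne3 : (1:ℝ) - P⁻¹ ^ n ≠ 0 := by nlinarith
    have hPne : P ≠ 0 := ne_of_gt hP0
    have hqP : q * P ^ (n-1) = 1 := by
      rw [hq, ← mul_pow, inv_mul_cancel₀ hPne, one_pow]
    simp only [eIdem, dhMeas, if_neg (by omega : ¬ mu = 0), if_neg h1, if_pos h2, ← hq]
    rcases eq_or_lt_of_le hmu with h | h
    · -- mu = 1
      subst h
      have hR : P ^ (n-1) = q⁻¹ := eq_inv_of_mul_eq_one_left (by rw [mul_comm]; exact hqP)
      have hqne : q ≠ 0 := ne_of_gt hq0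
      simp only [Nproj, Nat.sub_self, if_pos rfl, if_neg one_ne_zero, pow_one, if_true]
      rw [hPn, hR]
      exact alg13b P⁻¹ q hne1 hne2 (hPn ▸ hne3) hqne
    · -- mu ≥ 2
      have hm0 : ¬ (mu - 1 = 0) := by omega
      simp only [Nproj, if_neg hm0, if_neg (by omega : ¬ mu = 0),
        if_neg (by omega : ¬ mu - 1 = 0)]
      have hR : P ^ (n-1) = q⁻¹ := eq_inv_of_mul_eq_one_left (by rw [mul_comm]; exact hqP)
      have hqne : q ≠ 0 := ne_of_gt hq0
      have e2 : q ^ mu = q ^ (mu-1) * q := by rw [← pow_succ]; congr 1; omega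
      rw [hPn, hR, e2]
      have e1 : (q⁻¹) ^ mu = (q⁻¹) ^ (mu-1) * q⁻¹ := by rw [← pow_succ]; congr 1; omega
      rw [e1, inv_pow]
      exact alg13 P⁻¹ q (q ^ (mu-1)) hne1 hne2 (hPn ▸ hne3) hqne (pow_ne_zero _ hqne)
  · intro b hb hbne
    have : eIdem P n mu b = 0 := by
      simp only [eIdem, if_neg (by omega : ¬ mu = 0), Finset.mem_range] at *
      rw [if_neg (by omega), if_neg (by omega)]
      ring
    rw [this, zero_mul]

lemma ortho13 (P : ℝ) (hP : 1 < P) (n : ℕ) (hn : 2 ≤ n) (l mu : ℕ) (h : l < mu) :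
    ∑' ν : ℕ, eIdem P n l ν * eIdem P n mu ν * dhMeas P n ν = 0 := by
  set c : ℝ := if l = 0 then 1 else Nproj P n l - Nproj P n (l - 1) with hc
  have hconst : ∀ ν : ℕ, eIdem P n l ν * eIdem P n mu ν * dhMeas P n ν
      = c * (eIdem P n mu ν * dhMeas P n ν) := by
    intro ν
    by_cases hν : mu - 1 ≤ ν
    · have hl : eIdem P n l ν = c := by
        unfold eIdem
        rcases Nat.eq_zero_or_pos l with h0 | h0
        · simp [h0, hc]
        · rw [hc, if_neg (by omega : ¬ l = 0), if_neg (by omega : ¬ l = 0),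
            if_pos (by omega : l ≤ ν), if_pos (by omega : l - 1 ≤ ν)]
      rw [hl]; ring
    · have h0 : eIdem P n mu ν = 0 := by
        unfold eIdem
        rw [if_neg (by omega), if_neg (by omega), if_neg (by omega)]
        ring
      rw [h0]; ring
  calc ∑' ν : ℕ, eIdem P n l ν * eIdem P n mu ν * dhMeas P n ν
      = c * ∑' ν : ℕ, eIdem P n mu ν * dhMeas P n ν := by
        rw [tsum_congr hconst, tsum_mul_left]
    _ = 0 := by rw [key13 P hP n hn mu (by omega)]; ring

/-- The idempotents `e_λ` are pairwise orthogonal with respect to the measure `dh`. -/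
theorem stmt13 (P : ℝ) (hP : 1 < P) (n : ℕ) (hn : 2 ≤ n) (l mu : ℕ) (hne : l ≠ mu) :
    ∑' ν : ℕ, eIdem P n l ν * eIdem P n mu ν * dhMeas P n ν = 0 := by
  rcases lt_or_gt_of_ne hne with h | h
  · exact ortho13 P hP n hn l mu h
  · refine Eq.trans (tsum_congr fun ν => ?_) (ortho13 P hP n hn mu l h)
    ring
end

section
/- In the one-dimensional non-Archimedean Hecke algebra, for all λ ≥ 0: ∑_{ν=0}^∞ e_λ(p^{-ν})²·dh(ν) = e_λ(p^{-0}) = e_λ evaluated at ν = 0, i.e., ‖e_λ‖² = e_λ(0); explicitly, N_λ − N_{λ-1} = ∑_{ν≥λ} (N_λ 1_{ν≥λ} − N_{λ-1}1_{ν≥λ-1})² dh(ν) for λ ≥ 1. -/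
/-!
Write `q = P⁻¹` and `r = q ^ (n - 1)`, so that `dh(ν)` is geometric with ratio `r` for `ν ≥ 1`.
Summing the geometric series shows that the tail mass `dh{ν ≥ k}` equals `1 / N_k` for every
`k` (for `k = 0` this is the total mass `1`, where `q r = q ^ n` enters). Since
`1_{ν≥λ} 1_{ν≥λ-1} = 1_{ν≥λ}`, integrating `e_λ² = (N_λ² - 2 N_λ N_{λ-1}) 1_{ν≥λ} + N_{λ-1}² 1_{ν≥λ-1}`
gives `N_λ - 2 N_{λ-1} + N_{λ-1} = N_λ - N_{λ-1}`.
-/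

section
variable {P : ℝ} {n : ℕ}

lemma inv_pow_lt_one_of_one_lt (hP : 1 < P) {m : ℕ} (hm : m ≠ 0) : P⁻¹ ^ m < 1 :=
  pow_lt_one₀ (inv_pos.2 (by linarith)).le (inv_lt_one_of_one_lt₀ hP) hm

lemma one_sub_inv_pow_ne_zero (hP : 1 < P) {m : ℕ} (hm : m ≠ 0) : 1 - P⁻¹ ^ m ≠ 0 :=
  sub_ne_zero.2 (inv_pow_lt_one_of_one_lt hP hm).ne'

lemma dhMeas_of_ne_zero {ν : ℕ} (hν : ν ≠ 0) :
    dhMeas P n ν = (1 - P⁻¹) * (1 - P⁻¹ ^ (n - 1)) / (1 - P⁻¹ ^ n) * (P⁻¹ ^ (n - 1)) ^ ν :=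
  if_neg hν

lemma Nproj_of_ne_zero {l : ℕ} (hl : l ≠ 0) :
    Nproj P n l = (1 - P⁻¹ ^ n) / (1 - P⁻¹) / (P⁻¹ ^ (n - 1)) ^ l := by
  rw [Nproj, if_neg hl, div_eq_mul_inv _ ((P⁻¹ ^ (n - 1)) ^ l), ← inv_pow, ← inv_pow, inv_inv]

lemma Nproj_pos (hP : 1 < P) (hn : n ≠ 0) (l : ℕ) : 0 < Nproj P n l := by
  rcases eq_or_ne l 0 with rfl | hl
  · simp [Nproj]
  · have hq := inv_pow_lt_one_of_one_lt hP one_ne_zero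
    have hqn := inv_pow_lt_one_of_one_lt hP hn
    have : 0 < P⁻¹ := inv_pos.2 (by linarith)
    rw [Nproj_of_ne_zero hl]
    exact div_pos (div_pos (by linarith) (by linarith)) (by positivity)

lemma hasSum_dhMeas_nat_add (hP : 1 < P) (hn : 2 ≤ n) (k : ℕ) :
    HasSum (fun ν => dhMeas P n (ν + (k + 1))) (Nproj P n (k + 1))⁻¹ := by
  have hr := inv_pow_lt_one_of_one_lt hP (by omega : n - 1 ≠ 0)
  have : 0 < P⁻¹ := inv_pos.2 (by linarith)
  have hterm (ν : ℕ) :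
      dhMeas P n (ν + (k + 1)) = dhMeas P n (k + 1) * (P⁻¹ ^ (n - 1)) ^ ν := by
    rw [dhMeas_of_ne_zero (by omega), dhMeas_of_ne_zero (by omega), pow_add]
    ring
  have hsum : (Nproj P n (k + 1))⁻¹ = dhMeas P n (k + 1) * (1 - P⁻¹ ^ (n - 1))⁻¹ := by
    rw [Nproj_of_ne_zero (by omega), dhMeas_of_ne_zero (by omega)]
    have hq := one_sub_inv_pow_ne_zero hP one_ne_zero
    have hqn := one_sub_inv_pow_ne_zero hP (by omega : n ≠ 0)
    have hr' := one_sub_inv_pow_ne_zero hP (by omega : n - 1 ≠ 0)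
    have : P⁻¹ ^ (n - 1) ≠ 0 := by positivity
    rw [pow_one] at hq
    generalize P⁻¹ = q at *
    field_simp
  simpa only [hterm, hsum] using
    (hasSum_geometric_of_lt_one (by positivity) hr).mul_left (dhMeas P n (k + 1))

lemma hasSum_dhMeas (hP : 1 < P) (hn : 2 ≤ n) : HasSum (dhMeas P n) 1 := by
  have hmass : (Nproj P n 1)⁻¹ + dhMeas P n 0 = 1 := by
    have hq := one_sub_inv_pow_ne_zero hP one_ne_zero
    have hqn := one_sub_inv_pow_ne_zero hP (by omega : n ≠ 0)
    have : P⁻¹ ^ (n - 1) ≠ 0 := pow_ne_zero _ (inv_ne_zero (by linarith))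
    rw [pow_one] at hq
    rw [Nproj_of_ne_zero one_ne_zero, dhMeas, if_pos rfl]
    rw [← mul_pow_sub_one (by omega : n ≠ 0)] at hqn ⊢
    generalize P⁻¹ = q at *
    field_simp
    ring
  simpa only [zero_add, Finset.sum_range_one, hmass] using
    (hasSum_nat_add_iff 1).mp (hasSum_dhMeas_nat_add hP hn 0)

lemma hasSum_ite_le_dhMeas (hP : 1 < P) (hn : 2 ≤ n) (k : ℕ) :
    HasSum (fun ν => if k ≤ ν then dhMeas P n ν else 0) (Nproj P n k)⁻¹ := by
  cases k with
  | zero => simpa [Nproj] using hasSum_dhMeas hP hn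
  | succ k =>
    have h := (hasSum_nat_add_iff (f := fun ν => if k + 1 ≤ ν then dhMeas P n ν else 0)
      (k + 1)).mp (by simpa using hasSum_dhMeas_nat_add hP hn k)
    have hzero : ∑ i ∈ Finset.range (k + 1), (if k + 1 ≤ i then dhMeas P n i else 0) = 0 :=
      Finset.sum_eq_zero fun i hi => if_neg (by simp at hi; omega)
    rwa [hzero, add_zero] at h

lemma eIdem_sq_mul_dhMeas {l : ℕ} (hl : l ≠ 0) (ν : ℕ) :
    eIdem P n l ν ^ 2 * dhMeas P n ν =
      (Nproj P n l ^ 2 - 2 * Nproj P n l * Nproj P n (l - 1)) *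
          (if l ≤ ν then dhMeas P n ν else 0) +
        Nproj P n (l - 1) ^ 2 * (if l - 1 ≤ ν then dhMeas P n ν else 0) := by
  rw [eIdem, if_neg hl]
  split_ifs <;> first | omega | ring

lemma hasSum_eIdem_sq_mul_dhMeas (hP : 1 < P) (hn : 2 ≤ n) {l : ℕ} (hl : l ≠ 0) :
    HasSum (fun ν => eIdem P n l ν ^ 2 * dhMeas P n ν) (Nproj P n l - Nproj P n (l - 1)) := by
  have h := ((hasSum_ite_le_dhMeas hP hn l).mul_left
    (Nproj P n l ^ 2 - 2 * Nproj P n l * Nproj P n (l - 1))).add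
    ((hasSum_ite_le_dhMeas hP hn (l - 1)).mul_left (Nproj P n (l - 1) ^ 2))
  simp only [← eIdem_sq_mul_dhMeas hl] at h
  have hN := (Nproj_pos hP (by omega : n ≠ 0) l).ne'
  have hN' := (Nproj_pos hP (by omega : n ≠ 0) (l - 1)).ne'
  set N := Nproj P n l
  set N' := Nproj P n (l - 1)
  have hval : (N ^ 2 - 2 * N * N') * N⁻¹ + N' ^ 2 * N'⁻¹ = N - N' := by
    field_simp
    ring
  rwa [hval] at h

end

/-- `‖e_λ‖² = e_λ(𝟎)`: the squared norm of the idempotent equals its value at the origin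
(the relative position `p^{-∞}`), i.e. `1` for `λ = 0` and `N_λ - N_{λ-1}` for `λ ≥ 1`. -/
theorem stmt14 (P : ℝ) (hP : 1 < P) (n : ℕ) (hn : 2 ≤ n) :
    (∑' ν : ℕ, eIdem P n 0 ν ^ 2 * dhMeas P n ν = 1) ∧
      ∀ l : ℕ, 1 ≤ l →
        ∑' ν : ℕ, eIdem P n l ν ^ 2 * dhMeas P n ν = Nproj P n l - Nproj P n (l - 1) := by
  refine ⟨?_, fun l hl => (hasSum_eIdem_sq_mul_dhMeas hP hn (by omega)).tsum_eq⟩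
  simpa [eIdem] using (hasSum_dhMeas hP hn).tsum_eq
end

section
/- For the multiset of weights dh^K(p^{-λ}) indexed by partitions λ ∈ Λ_m (at most m parts), given by dh^K(p^{-λ}) = [m choose m−λ'₁, λ'₁−λ'₂, ...]_Q⁻¹-multinomial · ([n−m]!/([m−λ'₁]!·[n−2m]!)) / [n choose m] · Q^{−∑(λ'_i)² − (n−2m)∑λ'_i} (with Q = p^r and [j] = 1 − Q^{-j}), the total mass is 1: ∑_{λ ∈ Λ_m} dh^K(p^{-λ}) = 1. -/
/-- `[j]! = ∏_{k=1}^{j} (1 - Q^{-k})`. -/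
noncomputable def brFact (Q : ℝ) (j : ℕ) : ℝ := ∏ k ∈ Finset.range j, (1 - Q⁻¹ ^ (k + 1))

/-- The conjugate partition `λ'_i = #{j : λ_j ≥ i}`. -/
def conjP {m : ℕ} (lam : Fin m → ℕ) (i : ℕ) : ℕ :=
  (Finset.univ.filter fun j : Fin m => i ≤ lam j).card

/-- The non-Archimedean weight
`dh^K(p^{-λ}) = [m choose m-λ'₁,λ'₁-λ'₂,…]·([n-m]!/([m-λ'₁]![n-2m]!))/[n choose m]
· Q^{-∑(λ'_i)²-(n-2m)∑λ'_i}`. -/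
noncomputable def dhK (Q : ℝ) (n m : ℕ) (lam : Fin m → ℕ) : ℝ :=
  (brFact Q m / (brFact Q (m - conjP lam 1) *
      ∏ i ∈ Finset.Icc 1 (Finset.univ.sup lam), brFact Q (conjP lam i - conjP lam (i + 1)))) *
    (brFact Q (n - m) / (brFact Q (m - conjP lam 1) * brFact Q (n - 2 * m))) /
    (brFact Q n / (brFact Q m * brFact Q (n - m))) *
    Q⁻¹ ^ (∑ i ∈ Finset.Icc 1 (Finset.univ.sup lam), (conjP lam i) ^ 2 +
      (n - 2 * m) * ∑ i ∈ Finset.Icc 1 (Finset.univ.sup lam), conjP lam i)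

/-!
Write `q = Q⁻¹` and `c = n - 2m`. Removing the first column, of height `b = λ'₁`, from a partition
with at most `w` parts leaves a partition with at most `b` parts, and the weight
`(q)_w / ((q)_{w-λ'₁} ∏ (q)_{λ'ᵢ-λ'ᵢ₊₁}) · q^{∑ λ'ᵢ² + c λ'ᵢ}` factors as
`[w choose b]_q q^{b(b+c)}` times the weight of what is left. So the total weight `G(b)` of the
partitions with at most `b` parts satisfies `G(b) = ∑_{k ≤ b} [b choose k]_q q^{k(k+c)} G(k)`.
The `k = b` term is `q^{b(b+c)} G(b)` with `q^{b(b+c)} < 1`, and `G(b)` is finite because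
the weight is at most a constant times `q^{|λ|}`. So the recursion determines `G`, and
`G(b) = (q)_c / (q)_{c+b}` solves it. Summing over `b = λ'₁` turns the total mass of `dh^K`
into `∑_b [m choose b]_q [m+c choose m-b]_q q^{b(b+c)} / [2m+c choose m]_q`, which is `1`
by the q-Vandermonde identity.
-/

open Finset
open scoped ENNReal

noncomputable def qFact (q : ℝ) (j : ℕ) : ℝ := ∏ k ∈ range j, (1 - q ^ (k + 1))

noncomputable def qBinom (q : ℝ) (a k : ℕ) : ℝ :=
  if k ≤ a then qFact q a / (qFact q k * qFact q (a - k)) else 0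

section qAnalogues

variable {q : ℝ}

@[simp] lemma qFact_zero (q : ℝ) : qFact q 0 = 1 := prod_range_zero _

lemma qFact_succ (q : ℝ) (j : ℕ) : qFact q (j + 1) = qFact q j * (1 - q ^ (j + 1)) :=
  prod_range_succ _ _

lemma qFact_pos (hq0 : 0 ≤ q) (hq1 : q < 1) (j : ℕ) : 0 < qFact q j :=
  prod_pos fun k _ => sub_pos.2 (pow_lt_one₀ hq0 hq1 k.succ_ne_zero)

lemma qFact_ne_zero (hq0 : 0 ≤ q) (hq1 : q < 1) (j : ℕ) : qFact q j ≠ 0 :=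
  (qFact_pos hq0 hq1 j).ne'

lemma qFact_antitone (hq0 : 0 ≤ q) (hq1 : q ≤ 1) : Antitone (qFact q) := by
  refine antitone_nat_of_succ_le fun j => ?_
  rw [qFact_succ]
  refine mul_le_of_le_one_right (prod_nonneg fun k _ => ?_) (by linarith [pow_nonneg hq0 (j + 1)])
  linarith [pow_le_one₀ hq0 hq1 (n := k + 1)]

lemma one_sub_pow_le_qFact (hq0 : 0 ≤ q) (hq1 : q ≤ 1) (j : ℕ) : (1 - q) ^ j ≤ qFact q j :=
  calc (1 - q) ^ j = ∏ _k ∈ range j, (1 - q) := by rw [prod_const, card_range]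
    _ ≤ qFact q j := prod_le_prod (fun _ _ => sub_nonneg.2 hq1) fun k _ =>
        sub_le_sub_left (pow_le_of_le_one hq0 hq1 k.succ_ne_zero) 1

lemma qBinom_of_le (q : ℝ) {a k : ℕ} (h : k ≤ a) :
    qBinom q a k = qFact q a / (qFact q k * qFact q (a - k)) := if_pos h

lemma qBinom_of_lt (q : ℝ) {a k : ℕ} (h : a < k) : qBinom q a k = 0 := if_neg (not_le.2 h)

lemma qBinom_zero_right (hq0 : 0 ≤ q) (hq1 : q < 1) (a : ℕ) : qBinom q a 0 = 1 := by
  simp [qBinom_of_le, div_self (qFact_ne_zero hq0 hq1 a)]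

lemma qBinom_self (hq0 : 0 ≤ q) (hq1 : q < 1) (a : ℕ) : qBinom q a a = 1 := by
  simp [qBinom_of_le, div_self (qFact_ne_zero hq0 hq1 a)]

lemma qBinom_nonneg (hq0 : 0 ≤ q) (hq1 : q < 1) (a k : ℕ) : 0 ≤ qBinom q a k := by
  unfold qBinom
  split_ifs
  · exact div_nonneg (qFact_pos hq0 hq1 a).le
      (mul_pos (qFact_pos hq0 hq1 k) (qFact_pos hq0 hq1 _)).le
  · rfl

lemma qBinom_succ_succ (hq0 : 0 ≤ q) (hq1 : q < 1) (a k : ℕ) :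
    qBinom q (a + 1) (k + 1) = qBinom q a (k + 1) + q ^ (a - k) * qBinom q a k := by
  rcases lt_trichotomy k a with hk | rfl | hk
  · obtain ⟨d, rfl⟩ := Nat.exists_eq_add_of_lt hk
    rw [qBinom_of_le q (by omega), qBinom_of_le q (by omega), qBinom_of_le q (by omega),
      show k + d + 1 + 1 - (k + 1) = d + 1 by omega, show k + d + 1 - (k + 1) = d by omega,
      show k + d + 1 - k = d + 1 by omega, qFact_succ q (k + d + 1), qFact_succ q d,
      qFact_succ q k]
    have hd : 1 - q ^ (d + 1) ≠ 0 := (sub_pos.2 (pow_lt_one₀ hq0 hq1 d.succ_ne_zero)).ne'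
    have hk' : 1 - q ^ (k + 1) ≠ 0 := (sub_pos.2 (pow_lt_one₀ hq0 hq1 k.succ_ne_zero)).ne'
    field_simp [qFact_ne_zero hq0 hq1]
    ring
  · simp [qBinom_self hq0 hq1, qBinom_of_lt q (Nat.lt_succ_self k)]
  · simp [qBinom_of_lt q hk, qBinom_of_lt q (Nat.succ_lt_succ hk),
      qBinom_of_lt q (hk.trans (Nat.lt_succ_self k))]

lemma sum_qBinom_mul_pow_div_qFact (hq0 : 0 ≤ q) (hq1 : q < 1) (b c : ℕ) :
    ∑ k ∈ range (b + 1), qBinom q b k * q ^ (k * (k + c)) / qFact q (c + k) =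
      1 / qFact q (c + b) := by
  induction b generalizing c with
  | zero => simp [qBinom_self hq0 hq1]
  | succ b ih =>
    set F : ℕ → ℕ → ℕ → ℝ := fun c b k => qBinom q b k * q ^ (k * (k + c)) / qFact q (c + k)
    have hpascal : ∀ k ∈ range (b + 1),
        F c (b + 1) (k + 1) = F c b (k + 1) + q ^ (c + b + 1) * F (c + 1) b k := by
      intro k hk
      have hkb : k ≤ b := Nat.lt_succ_iff.1 (mem_range.1 hk)
      have hexp : b - k + (k + 1) * (k + 1 + c) = k * (k + (c + 1)) + (c + b + 1) := by
        zify [hkb]; ring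
      have hpow : q ^ (b - k) * q ^ ((k + 1) * (k + 1 + c)) =
          q ^ (c + b + 1) * q ^ (k * (k + (c + 1))) := by
        rw [← pow_add, ← pow_add, hexp, add_comm]
      simp only [F, qBinom_succ_succ hq0 hq1, show c + 1 + k = c + (k + 1) by ring]
      linear_combination (qBinom q b k / qFact q (c + (k + 1))) * hpow
    have hzero : F c (b + 1) 0 = F c b 0 := by simp [F, qBinom_zero_right hq0 hq1]
    have hlow : ∑ k ∈ range (b + 1), F c b (k + 1) + F c b 0 = 1 / qFact q (c + b) := by
      rw [← sum_range_succ', sum_range_succ, ← ih c]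
      simp [F, qBinom_of_lt q (Nat.lt_succ_self b)]
    calc ∑ k ∈ range (b + 1 + 1), F c (b + 1) k
        = ∑ k ∈ range (b + 1), F c b (k + 1) + F c b 0
          + q ^ (c + b + 1) * ∑ k ∈ range (b + 1), F (c + 1) b k := by
          rw [sum_range_succ', sum_congr rfl hpascal, sum_add_distrib, ← mul_sum, hzero]; ring
      _ = 1 / qFact q (c + (b + 1)) := by
          rw [hlow, ih (c + 1), ← add_assoc, add_right_comm c 1 b, qFact_succ q (c + b)]
          have : 1 - q ^ (c + b + 1) ≠ 0 := (sub_pos.2 (pow_lt_one₀ hq0 hq1 (by omega))).ne'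
          field_simp [qFact_ne_zero hq0 hq1]
          ring

lemma div_qFact_eq_sum (hq0 : 0 ≤ q) (hq1 : q < 1) (b c : ℕ) :
    qFact q c / qFact q (c + b) =
      ∑ k ∈ range (b + 1), qBinom q b k * q ^ (k * (k + c)) * (qFact q c / qFact q (c + k)) := by
  rw [div_eq_mul_one_div, ← sum_qBinom_mul_pow_div_qFact hq0 hq1 b c, mul_sum]
  exact sum_congr rfl fun k _ => by ring

lemma qBinom_vandermonde (hq0 : 0 ≤ q) (hq1 : q < 1) (a b t : ℕ) (htb : t ≤ b) :
    ∑ k ∈ range (t + 1), qBinom q a k * qBinom q b (t - k) * q ^ (k * (b - t + k)) =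
      qBinom q (a + b) t := by
  induction a generalizing t with
  | zero =>
    rw [sum_range_succ', sum_eq_zero fun k _ => by simp [qBinom_of_lt q (Nat.succ_pos k)]]
    simp [qBinom_zero_right hq0 hq1]
  | succ a ih =>
    rcases t with _ | s
    · simp [qBinom_zero_right hq0 hq1]
    set G : ℕ → ℕ → ℕ → ℝ := fun a s k =>
      qBinom q a k * qBinom q b (s - k) * q ^ (k * (b - s + k))
    have hpascal : ∀ k, G (a + 1) (s + 1) (k + 1) =
        G a (s + 1) (k + 1) + q ^ (a + b - s) * G a s k := by
      intro k
      simp only [G, qBinom_succ_succ hq0 hq1, Nat.add_sub_add_right,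
        show b - (s + 1) + (k + 1) = b - s + k by omega]
      rcases le_or_gt k a with hka | hka
      · have hexp : a - k + (k + 1) * (b - s + k) = a + b - s + k * (b - s + k) := by
          zify [hka, show s ≤ b by omega, show s ≤ a + b by omega]; ring
        have hpow := congrArg (q ^ ·) hexp
        simp only [pow_add] at hpow
        linear_combination (qBinom q a k * qBinom q b (s - k)) * hpow
      · simp [qBinom_of_lt q hka, qBinom_of_lt q (hka.trans (Nat.lt_succ_self k))]
    calc ∑ k ∈ range (s + 1 + 1), G (a + 1) (s + 1) k
        = ∑ k ∈ range (s + 1 + 1), G a (s + 1) k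
          + q ^ (a + b - s) * ∑ k ∈ range (s + 1), G a s k := by
          rw [sum_range_succ', sum_congr rfl fun k _ => hpascal k, sum_add_distrib, ← mul_sum,
            sum_range_succ' (G a (s + 1))]
          simp [G, qBinom_zero_right hq0 hq1]
          ring
      _ = qBinom q (a + 1 + b) (s + 1) := by
          rw [ih (s + 1) htb, ih s (by omega), add_right_comm, qBinom_succ_succ hq0 hq1]

end qAnalogues

@[to_additive]
lemma Finset.prod_Icc_eq_mul_prod_shift {M : Type*} [CommMonoid M] (h : ℕ → M) (N : ℕ) :
    ∏ i ∈ Icc 1 (N + 1), h i = h 1 * ∏ i ∈ Icc 1 N, h (i + 1) := by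
  rw [← Ico_add_one_right_eq_Icc, ← Ico_add_one_right_eq_Icc,
    prod_eq_prod_Ico_succ_bot (by omega), prod_Ico_add']

lemma sum_Icc_tsub_add_eq {x : ℕ → ℕ} (hx : Antitone x) (N : ℕ) :
    ∑ i ∈ Icc 1 N, (x i - x (i + 1)) + x (N + 1) = x 1 := by
  induction N with
  | zero => simp
  | succ N ih =>
    rw [sum_Icc_succ_top (by omega), add_assoc, Nat.sub_add_cancel (hx (by omega)), ih]

lemma ENNReal.tsum_pow_sum_fin (r : ℝ≥0∞) (b : ℕ) :
    ∑' g : Fin b → ℕ, r ^ ∑ j, g j = (∑' k : ℕ, r ^ k) ^ b := by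
  induction b with
  | zero => simp
  | succ b ih =>
    rw [← (Fin.consEquiv fun _ => ℕ).tsum_eq, ENNReal.tsum_prod', pow_succ', ← ih,
      ← ENNReal.tsum_mul_right]
    refine tsum_congr fun k => ?_
    rw [← ENNReal.tsum_mul_left]
    refine tsum_congr fun g => ?_
    simp [Fin.consEquiv, Fin.sum_cons, pow_add]

lemma ENNReal.eq_of_eq_add_mul {a t x y : ℝ≥0∞} (ht : t < 1) (hx : x ≠ ∞) (hy : y ≠ ∞)
    (hxa : x = a + t * x) (hya : y = a + t * y) : x = y := by
  have key : ∀ z ≠ ∞, z = a + t * z → (1 - t) * z = a := fun z hz hza => by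
    rw [ENNReal.sub_mul fun _ _ => hz, one_mul, ← ENNReal.eq_sub_of_add_eq
      (ENNReal.mul_ne_top ht.ne_top hz) hza.symm]
  exact (ENNReal.mul_right_inj (tsub_pos_of_lt ht).ne' (by simp)).1
    ((key x hx hxa).trans (key y hy hya).symm)

section conjugate

variable {w b : ℕ}

lemma conjP_le (f : Fin w → ℕ) (i : ℕ) : conjP f i ≤ w :=
  (card_filter_le _ _).trans (card_fin w).le

lemma conjP_antitone (f : Fin w → ℕ) : Antitone (conjP f) := fun _ _ h =>
  card_le_card fun _ => by simp only [mem_filter, mem_univ, true_and]; omega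

lemma conjP_zero (f : Fin w → ℕ) : conjP f 0 = w := by simp [conjP]

lemma conjP_eq_zero_of_sup_lt {f : Fin w → ℕ} {i : ℕ} (hi : univ.sup f < i) : conjP f i = 0 :=
  card_eq_zero.2 <| filter_eq_empty_iff.2 fun j _ =>
    not_le.2 ((le_sup (mem_univ j)).trans_lt hi)

lemma lt_conjP_iff {f : Fin w → ℕ} (hf : Antitone f) (i : ℕ) (j : Fin w) :
    (j : ℕ) < conjP f i ↔ i ≤ f j := by
  constructor
  · intro hj
    by_contra hij
    have hsub : univ.filter (fun j' => i ≤ f j') ⊆ Iio j := fun j' hj' => by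
      simp only [mem_filter, mem_univ, true_and] at hj'
      exact mem_Iio.2 (lt_of_not_ge fun hjj' => hij (hj'.trans (hf hjj')))
    have := card_le_card hsub
    rw [Fin.card_Iio] at this
    exact absurd hj (not_lt.2 this)
  · intro hij
    have hsub : Iic j ⊆ univ.filter (fun j' => i ≤ f j') := fun j' hj' => by
      simpa using hij.trans (hf (mem_Iic.1 hj'))
    have := card_le_card hsub
    rwa [Fin.card_Iic] at this

lemma sum_conjP (f : Fin w → ℕ) {N : ℕ} (hN : univ.sup f ≤ N) :
    ∑ i ∈ Icc 1 N, conjP f i = ∑ j, f j := by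
  simp only [conjP, card_filter]
  rw [sum_comm]
  refine sum_congr rfl fun j _ => ?_
  rw [← card_filter, show (Icc 1 N).filter (· ≤ f j) = Icc 1 (f j) by
    ext i; simp only [mem_filter, mem_Icc]; have := (le_sup (mem_univ j)).trans hN; omega]
  simp

def addColumn (w : ℕ) (g : Fin b → ℕ) : Fin w → ℕ :=
  fun j => if h : (j : ℕ) < b then g ⟨j, h⟩ + 1 else 0

lemma addColumn_castLE (hb : b ≤ w) (g : Fin b → ℕ) (j : Fin b) :
    addColumn w g (Fin.castLE hb j) = g j + 1 := by
  simp [addColumn]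

lemma addColumn_antitone {g : Fin b → ℕ} (hg : Antitone g) : Antitone (addColumn w g) := by
  intro j j' hjj'
  have : (j : ℕ) ≤ j' := hjj'
  unfold addColumn
  split_ifs
  · exact Nat.succ_le_succ (hg (Fin.mk_le_mk.2 hjj'))
  all_goals omega

lemma conjP_addColumn_succ (hb : b ≤ w) (g : Fin b → ℕ) (i : ℕ) :
    conjP (addColumn w g) (i + 1) = conjP g i := by
  unfold conjP
  rw [← card_map (Fin.castLEEmb hb)]
  congr 1
  ext j
  simp only [mem_filter, mem_univ, true_and, mem_map, Fin.castLEEmb_apply]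
  constructor
  · intro hj
    have hjb : (j : ℕ) < b := by
      by_contra h
      simp [addColumn, h] at hj
    exact ⟨⟨j, hjb⟩, by simpa [addColumn, hjb] using hj, rfl⟩
  · rintro ⟨j, hj, rfl⟩
    rw [addColumn_castLE]
    omega

lemma conjP_addColumn_one (hb : b ≤ w) (g : Fin b → ℕ) : conjP (addColumn w g) 1 = b := by
  rw [conjP_addColumn_succ hb, conjP_zero]

lemma sup_addColumn_le (g : Fin b → ℕ) : univ.sup (addColumn w g) ≤ univ.sup g + 1 := by
  refine Finset.sup_le fun j _ => ?_
  unfold addColumn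
  split_ifs
  · exact Nat.succ_le_succ (le_sup (mem_univ _))
  · exact Nat.zero_le _

def addColumnMap (w : ℕ) :
    (Σ b : Fin (w + 1), {g : Fin b → ℕ // Antitone g}) → {f : Fin w → ℕ // Antitone f} :=
  fun x => ⟨addColumn w x.2.1, addColumn_antitone x.2.2⟩

lemma addColumnMap_bijective (w : ℕ) : Function.Bijective (addColumnMap w) := by
  constructor
  · rintro ⟨b, g, hg⟩ ⟨b', g', hg'⟩ h
    have hf := congrArg Subtype.val h
    simp only [addColumnMap] at hf
    obtain rfl : b = b' := Fin.ext <| by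
      rw [← conjP_addColumn_one (Nat.lt_succ_iff.1 b.2) g, hf,
        conjP_addColumn_one (Nat.lt_succ_iff.1 b'.2)]
    obtain rfl : g = g' := funext fun j => by
      simpa [addColumn_castLE] using congrFun hf (Fin.castLE (Nat.lt_succ_iff.1 b.2) j)
    rfl
  · rintro ⟨f, hf⟩
    have hb : conjP f 1 ≤ w := conjP_le f 1
    refine ⟨⟨⟨conjP f 1, Nat.lt_succ_of_le hb⟩, fun j => f (Fin.castLE hb j) - 1,
      fun j j' hjj' => Nat.sub_le_sub_right (hf ((Fin.castLE_le_castLE_iff hb).2 hjj')) 1⟩,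
      Subtype.ext (funext fun j => ?_)⟩
    have := lt_conjP_iff hf 1 j
    simp only [addColumnMap, addColumn]
    split_ifs
    · simp only [Fin.castLE_mk, Fin.eta]
      omega
    · omega

end conjugate

section weight

variable {q : ℝ} {c w b : ℕ}

noncomputable def weightUpTo (q : ℝ) (c w N : ℕ) (f : Fin w → ℕ) : ℝ :=
  qFact q w / (qFact q (w - conjP f 1) *
      ∏ i ∈ Icc 1 N, qFact q (conjP f i - conjP f (i + 1))) *
    q ^ (∑ i ∈ Icc 1 N, conjP f i ^ 2 + c * ∑ i ∈ Icc 1 N, conjP f i)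

noncomputable def weight (q : ℝ) (c w : ℕ) (f : Fin w → ℕ) : ℝ :=
  weightUpTo q c w (univ.sup f) f

lemma weightUpTo_eq_weight {f : Fin w → ℕ} {N : ℕ} (hN : univ.sup f ≤ N) :
    weightUpTo q c w N f = weight q c w f := by
  have hsub : Icc 1 (univ.sup f) ⊆ Icc 1 N := Icc_subset_Icc_right hN
  have hvanish : ∀ i ∈ Icc 1 N, i ∉ Icc 1 (univ.sup f) →
      conjP f i = 0 ∧ conjP f (i + 1) = 0 := fun i hi hi' => by
    simp only [mem_Icc, not_and, not_le] at hi hi'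
    exact ⟨conjP_eq_zero_of_sup_lt (hi' hi.1), conjP_eq_zero_of_sup_lt (by omega)⟩
  rw [weight, weightUpTo, weightUpTo,
    prod_subset hsub fun i hi hi' => by simp [(hvanish i hi hi').1, (hvanish i hi hi').2],
    sum_subset hsub fun i hi hi' => by simp [(hvanish i hi hi').1],
    sum_subset hsub fun i hi hi' => (hvanish i hi hi').1]

lemma weight_nonneg (hq0 : 0 ≤ q) (hq1 : q < 1) (f : Fin w → ℕ) : 0 ≤ weight q c w f :=
  mul_nonneg (div_nonneg (qFact_pos hq0 hq1 w).le (mul_nonneg (qFact_pos hq0 hq1 _).le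
    (prod_nonneg fun _ _ => (qFact_pos hq0 hq1 _).le))) (pow_nonneg hq0 _)

lemma weight_addColumn (hq0 : 0 ≤ q) (hq1 : q < 1) (hb : b ≤ w) (g : Fin b → ℕ) :
    weight q c w (addColumn w g) = qBinom q w b * q ^ (b * (b + c)) * weight q c b g := by
  rw [← weightUpTo_eq_weight (sup_addColumn_le g), weight, weightUpTo, weightUpTo,
    prod_Icc_eq_mul_prod_shift, sum_Icc_eq_add_sum_shift, sum_Icc_eq_add_sum_shift,
    conjP_addColumn_one hb]
  simp only [conjP_addColumn_succ hb]
  have hP : ∏ i ∈ Icc 1 (univ.sup g), qFact q (conjP g i - conjP g (i + 1)) ≠ 0 :=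
    prod_ne_zero_iff.2 fun i _ => qFact_ne_zero hq0 hq1 _
  rw [qBinom_of_le q hb, show ∀ S₂ S₁, b ^ 2 + S₂ + c * (b + S₁) = b * (b + c) + (S₂ + c * S₁) by
    intros; ring, pow_add]
  field_simp [qFact_ne_zero hq0 hq1]

lemma weight_le (hq0 : 0 ≤ q) (hq1 : q < 1) (g : Fin b → ℕ) :
    weight q c b g ≤ ((1 - q) ^ b)⁻¹ * q ^ ∑ j, g j := by
  unfold weight weightUpTo
  set N := univ.sup g
  set P := ∏ i ∈ Icc 1 N, qFact q (conjP g i - conjP g (i + 1))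
  have hP : (1 - q) ^ b ≤ P := calc
    (1 - q) ^ b ≤ (1 - q) ^ ∑ i ∈ Icc 1 N, (conjP g i - conjP g (i + 1)) := by
      refine pow_le_pow_of_le_one (by linarith) (by linarith) ?_
      have := sum_Icc_tsub_add_eq (conjP_antitone g) N
      have := conjP_le g 1
      omega
    _ ≤ P := by
      rw [← prod_pow_eq_pow_sum]
      exact prod_le_prod (fun _ _ => pow_nonneg (by linarith) _)
        fun _ _ => one_sub_pow_le_qFact hq0 hq1.le _
  have hqP : 0 < (1 - q) ^ b := pow_pos (by linarith) b
  have hfrac : qFact q b / (qFact q (b - conjP g 1) * P) ≤ ((1 - q) ^ b)⁻¹ := by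
    rw [div_le_iff₀ (mul_pos (qFact_pos hq0 hq1 _) (hqP.trans_le hP)), ← div_eq_inv_mul,
      le_div_iff₀ hqP]
    exact mul_le_mul (qFact_antitone hq0 hq1.le (Nat.sub_le _ _)) hP hqP.le
      (qFact_pos hq0 hq1 _).le
  have hexp : ∑ j, g j ≤ ∑ i ∈ Icc 1 N, conjP g i ^ 2 + c * ∑ i ∈ Icc 1 N, conjP g i := by
    rw [← sum_conjP g le_rfl]
    exact le_add_right (sum_le_sum fun i _ => Nat.le_self_pow two_ne_zero _)
  exact mul_le_mul hfrac (pow_le_pow_of_le_one hq0 hq1.le hexp) (pow_nonneg hq0 _)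
    (inv_nonneg.2 hqP.le)

end weight

section weightSum

variable {q : ℝ}

noncomputable def weightSum (q : ℝ) (c b : ℕ) : ℝ≥0∞ :=
  ∑' g : {g : Fin b → ℕ // Antitone g}, ENNReal.ofReal (weight q c b g)

lemma tsum_weight_eq_sum_weightSum (hq0 : 0 ≤ q) (hq1 : q < 1) (c w : ℕ) (D : ℕ → ℝ≥0∞) :
    ∑' f : {f : Fin w → ℕ // Antitone f}, D (conjP f.1 1) * ENNReal.ofReal (weight q c w f) =
      ∑ b ∈ range (w + 1),
        D b * ENNReal.ofReal (qBinom q w b * q ^ (b * (b + c))) * weightSum q c b := by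
  rw [← (Equiv.ofBijective _ (addColumnMap_bijective w)).tsum_eq, ENNReal.tsum_sigma',
    tsum_fintype, ← Fin.sum_univ_eq_sum_range]
  refine sum_congr rfl fun b _ => ?_
  have hb : (b : ℕ) ≤ w := Nat.lt_succ_iff.1 b.2
  rw [weightSum, ← ENNReal.tsum_mul_left]
  refine tsum_congr fun g => ?_
  simp only [Equiv.ofBijective_apply, addColumnMap, conjP_addColumn_one hb,
    weight_addColumn hq0 hq1 hb]
  rw [ENNReal.ofReal_mul (mul_nonneg (qBinom_nonneg hq0 hq1 _ _) (pow_nonneg hq0 _)), mul_assoc]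

lemma weightSum_ne_top (hq0 : 0 ≤ q) (hq1 : q < 1) (c b : ℕ) : weightSum q c b ≠ ∞ := by
  have hC : 0 ≤ ((1 - q) ^ b)⁻¹ := inv_nonneg.2 (pow_nonneg (by linarith) b)
  refine ne_top_of_le_ne_top ?_ (calc
    weightSum q c b ≤ ∑' g : {g : Fin b → ℕ // Antitone g},
        ENNReal.ofReal ((1 - q) ^ b)⁻¹ * ENNReal.ofReal q ^ ∑ j, g.1 j :=
      ENNReal.tsum_le_tsum fun g => by
        rw [← ENNReal.ofReal_pow hq0, ← ENNReal.ofReal_mul hC]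
        exact ENNReal.ofReal_le_ofReal (weight_le hq0 hq1 g.1)
    _ ≤ ENNReal.ofReal ((1 - q) ^ b)⁻¹ * ∑' g : Fin b → ℕ, ENNReal.ofReal q ^ ∑ j, g j := by
      rw [ENNReal.tsum_mul_left]
      exact mul_le_mul_right (ENNReal.tsum_comp_le_tsum_of_injective Subtype.val_injective
        fun g : Fin b → ℕ => ENNReal.ofReal q ^ ∑ j, g j) _)
  rw [ENNReal.tsum_pow_sum_fin]
  exact ENNReal.mul_ne_top ENNReal.ofReal_ne_top (ENNReal.pow_ne_top
    (tsum_geometric_lt_top.2 (ENNReal.ofReal_lt_one.2 hq1)).ne)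

lemma weightSum_zero (c : ℕ) : weightSum q c 0 = 1 := by
  have : Fintype.card {g : Fin 0 → ℕ // Antitone g} = 1 :=
    Fintype.card_eq_one_iff.2 ⟨⟨Fin.elim0, fun a => a.elim0⟩, fun _ => Subsingleton.elim _ _⟩
  simp [weightSum, weight, weightUpTo, this]

lemma weightSum_eq (hq0 : 0 ≤ q) (hq1 : q < 1) (c b : ℕ) :
    weightSum q c b = ENNReal.ofReal (qFact q c / qFact q (c + b)) := by
  induction b using Nat.strong_induction_on with
  | _ b ih =>
  rcases Nat.eq_zero_or_pos b with rfl | hb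
  · simp [weightSum_zero, div_self (qFact_ne_zero hq0 hq1 c)]
  have hrec : weightSum q c b = ∑ k ∈ range (b + 1),
      ENNReal.ofReal (qBinom q b k * q ^ (k * (k + c))) * weightSum q c k := by
    rw [weightSum]
    simpa only [one_mul] using tsum_weight_eq_sum_weightSum hq0 hq1 c b fun _ => 1
  set coeff : ℕ → ℝ := fun k => qBinom q b k * q ^ (k * (k + c))
  set V : ℕ → ℝ := fun k => qFact q c / qFact q (c + k)
  have hcoeff : ∀ k, 0 ≤ coeff k := fun k =>
    mul_nonneg (qBinom_nonneg hq0 hq1 b k) (pow_nonneg hq0 _)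
  have hV : ∀ k, 0 ≤ V k := fun k =>
    div_nonneg (qFact_pos hq0 hq1 c).le (qFact_pos hq0 hq1 _).le
  have hVrec : ENNReal.ofReal (V b) =
      ∑ k ∈ range (b + 1), ENNReal.ofReal (coeff k) * ENNReal.ofReal (V k) := by
    rw [show V b = ∑ k ∈ range (b + 1), coeff k * V k from div_qFact_eq_sum hq0 hq1 b c,
      ENNReal.ofReal_sum_of_nonneg fun k _ => mul_nonneg (hcoeff k) (hV k)]
    exact sum_congr rfl fun k _ => ENNReal.ofReal_mul (hcoeff k)
  have hlow : ∑ k ∈ range b, ENNReal.ofReal (coeff k) * weightSum q c k =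
      ∑ k ∈ range b, ENNReal.ofReal (coeff k) * ENNReal.ofReal (V k) :=
    sum_congr rfl fun k hk => by rw [ih k (mem_range.1 hk)]
  rw [sum_range_succ, hlow] at hrec
  rw [sum_range_succ] at hVrec
  refine ENNReal.eq_of_eq_add_mul ?_ (weightSum_ne_top hq0 hq1 c b) ENNReal.ofReal_ne_top
    hrec hVrec
  simp only [qBinom_self hq0 hq1, one_mul]
  exact ENNReal.ofReal_lt_one.2 (pow_lt_one₀ hq0 hq1 (by positivity))

end weightSum

noncomputable def firstColumnFactor (q : ℝ) (m c b : ℕ) : ℝ :=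
  qFact q (m + c) / (qFact q (m - b) * qFact q c) /
    (qFact q (2 * m + c) / (qFact q m * qFact q (m + c)))

lemma firstColumnFactor_nonneg {q : ℝ} (hq0 : 0 ≤ q) (hq1 : q < 1) (m c b : ℕ) :
    0 ≤ firstColumnFactor q m c b := by
  have h := fun j => (qFact_pos hq0 hq1 j).le
  exact div_nonneg (div_nonneg (h _) (mul_nonneg (h _) (h _)))
    (div_nonneg (h _) (mul_nonneg (h _) (h _)))

lemma dhK_eq_mul_weight (Q : ℝ) (m c : ℕ) (f : Fin m → ℕ) :
    dhK Q (2 * m + c) m f = firstColumnFactor Q⁻¹ m c (conjP f 1) * weight Q⁻¹ c m f := by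
  simp only [dhK, brFact, firstColumnFactor, weight, weightUpTo, qFact,
    show 2 * m + c - m = m + c by omega, show 2 * m + c - 2 * m = c by omega]
  ring

lemma sum_firstColumnFactor_eq_one {q : ℝ} (hq0 : 0 ≤ q) (hq1 : q < 1) (m c : ℕ) :
    ∑ b ∈ range (m + 1), firstColumnFactor q m c b *
        (qBinom q m b * q ^ (b * (b + c))) * (qFact q c / qFact q (c + b)) = 1 := by
  have hvdm := qBinom_vandermonde hq0 hq1 m (m + c) m (by omega)
  rw [show m + (m + c) = 2 * m + c by ring, qBinom_of_le q (by omega),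
    show 2 * m + c - m = m + c by omega] at hvdm
  have hne := qFact_ne_zero hq0 hq1
  rw [← div_self (div_ne_zero (hne _) (mul_ne_zero (hne m) (hne (m + c)))), ← hvdm, sum_div]
  refine sum_congr rfl fun b hb => ?_
  have hbm : b ≤ m := Nat.lt_succ_iff.1 (mem_range.1 hb)
  rw [hvdm, firstColumnFactor, qBinom_of_le q (show m - b ≤ m + c by omega),
    show m + c - (m - b) = c + b by omega, show m + c - m + b = b + c by omega, mul_comm b]
  field_simp [hne]

lemma tsum_firstColumnFactor_mul_weight {q : ℝ} (hq0 : 0 ≤ q) (hq1 : q < 1) (m c : ℕ) :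
    ∑' f : {f : Fin m → ℕ // Antitone f},
      ENNReal.ofReal (firstColumnFactor q m c (conjP f.1 1) * weight q c m f) = 1 := by
  have hA := firstColumnFactor_nonneg hq0 hq1 m c
  have hcoeff : ∀ b, 0 ≤ qBinom q m b * q ^ (b * (b + c)) := fun b =>
    mul_nonneg (qBinom_nonneg hq0 hq1 m b) (pow_nonneg hq0 _)
  have hV : ∀ b, 0 ≤ qFact q c / qFact q (c + b) := fun b =>
    div_nonneg (qFact_pos hq0 hq1 c).le (qFact_pos hq0 hq1 _).le
  simp_rw [ENNReal.ofReal_mul (hA _)]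
  rw [tsum_weight_eq_sum_weightSum hq0 hq1 c m fun b => ENNReal.ofReal (firstColumnFactor q m c b),
    ← ENNReal.ofReal_one, ← sum_firstColumnFactor_eq_one hq0 hq1 m c,
    ENNReal.ofReal_sum_of_nonneg fun b _ => mul_nonneg (mul_nonneg (hA b) (hcoeff b)) (hV b)]
  refine sum_congr rfl fun b _ => ?_
  rw [weightSum_eq hq0 hq1, ENNReal.ofReal_mul (mul_nonneg (hA b) (hcoeff b)),
    ENNReal.ofReal_mul (hA b)]

theorem stmt15_general (p r : ℕ) (hp : p.Prime) (hr : 1 ≤ r) (Q : ℝ) (hQ : Q = (p : ℝ) ^ r)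
    (n m : ℕ) (hnm : 2 * m ≤ n) :
    ∑' lam : {f : Fin m → ℕ // Antitone f}, dhK Q n m lam.1 = 1 := by
  have hQ1 : 1 < Q := hQ ▸ one_lt_pow₀ (by exact_mod_cast hp.one_lt) (by omega)
  have hq0 : 0 ≤ Q⁻¹ := inv_nonneg.2 (by linarith)
  have hq1 : Q⁻¹ < 1 := inv_lt_one_of_one_lt₀ hQ1
  obtain ⟨c, rfl⟩ := Nat.exists_eq_add_of_le hnm
  have hdhK := dhK_eq_mul_weight Q m c
  have hnonneg : ∀ f, 0 ≤ dhK Q (2 * m + c) m f := fun f =>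
    hdhK f ▸ mul_nonneg (firstColumnFactor_nonneg hq0 hq1 m c _) (weight_nonneg hq0 hq1 f)
  have hmass := tsum_firstColumnFactor_mul_weight hq0 hq1 m c
  simp_rw [← hdhK] at hmass
  calc ∑' f : {f : Fin m → ℕ // Antitone f}, dhK Q (2 * m + c) m f
      = ∑' f : {f : Fin m → ℕ // Antitone f}, (ENNReal.ofReal (dhK Q (2 * m + c) m f)).toReal :=
        tsum_congr fun f => (ENNReal.toReal_ofReal (hnonneg f)).symm
    _ = 1 := by
      rw [← ENNReal.tsum_toReal_eq fun _ => ENNReal.ofReal_ne_top, hmass, ENNReal.toReal_one]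

/-- The non-Archimedean weights `dh^K(p^{-λ})`, `λ ∈ Λ_m`, have total mass 1. -/
theorem stmt15 (p r : ℕ) (hp : p.Prime) (hr : 1 ≤ r) (Q : ℝ) (hQ : Q = (p : ℝ) ^ r)
    (n m : ℕ) (hm : 1 ≤ m) (hnm : 2 * m ≤ n) :
    ∑' lam : {f : Fin m → ℕ // Antitone f}, dhK Q n m lam.1 = 1 :=
  stmt15_general p r hp hr Q hQ n m hnm
end

section
/- For q, t ∈ (0,1) and the one-row partition case m = 1 (so t plays no role): the little q-Jacobi polynomial value at zero, D^q_λ(a,b) = (1 − a b q^{2λ−1})(a b q^{-1};q)_λ (a;q)_λ / [(1 − a b q^{-1})(q;q)_λ (b;q)_λ a^λ], satisfies lim_{q→0⁺} D^q_λ(p^{-(n-1)}, p^{-1}) = dim U^K_λ, i.e., equals 1 for λ = 0, (1−p^{-(n-1)})/(1−p^{-1})·p^{(n-1)} for λ = 1, and (1−p^{-n})(1−p^{-(n-1)})/(1−p^{-1})·p^{(n-1)λ} for λ ≥ 2. -/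
open Filter

/-- The quantum dimension
`D^q_λ(a,b) = (1-abq^{2λ-1})(abq^{-1};q)_λ(a;q)_λ / [(1-abq^{-1})(q;q)_λ(b;q)_λ a^λ]`. -/
noncomputable def Dq (q a b : ℝ) (l : ℕ) : ℝ :=
  ((1 - a * b * q ^ (2 * l) / q) * qPoch (a * b / q) q l * qPoch a q l) /
    ((1 - a * b / q) * qPoch q q l * qPoch b q l * a ^ l)

lemma qPoch_q_zero (x : ℝ) (m : ℕ) : qPoch x 0 (m + 1) = 1 - x := by
  simp [qPoch, Finset.prod_range_succ', pow_succ]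

lemma qPoch_cont (x : ℝ) (l : ℕ) : Continuous fun q : ℝ => qPoch x q l := by
  unfold qPoch
  exact continuous_finset_prod _ fun i _ =>
    continuous_const.sub ((continuous_pow i).mul continuous_const)

lemma qPoch_cont' (l : ℕ) : Continuous fun q : ℝ => qPoch q q l := by
  unfold qPoch
  exact continuous_finset_prod _ fun i _ =>
    continuous_const.sub ((continuous_pow i).mul continuous_id)

/-- `lim_{q→0⁺} D^q_λ(p^{-(n-1)}, p^{-1}) = dim U^K_λ`: it equals `1` for `λ = 0`,
`(1-p^{-(n-1)})/(1-p^{-1})·p^{n-1}` for `λ = 1`, and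
`(1-p^{-n})(1-p^{-(n-1)})/(1-p^{-1})·p^{(n-1)λ}` for `λ ≥ 2`. -/
theorem stmt17 (p : ℕ) (hp : p.Prime) (n : ℕ) (hn : 2 ≤ n) (l : ℕ) :
    Tendsto (fun q : ℝ => Dq q (((p : ℝ))⁻¹ ^ (n - 1)) ((p : ℝ))⁻¹ l)
      (nhdsWithin 0 (Set.Ioi 0))
      (nhds (if l = 0 then 1
        else if l = 1 then (1 - ((p : ℝ))⁻¹ ^ (n - 1)) / (1 - ((p : ℝ))⁻¹) * (p : ℝ) ^ (n - 1)
        else (1 - ((p : ℝ))⁻¹ ^ n) * (1 - ((p : ℝ))⁻¹ ^ (n - 1)) / (1 - ((p : ℝ))⁻¹) *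
          ((p : ℝ) ^ (n - 1)) ^ l)) := by
  have hp1 : (1:ℝ) < (p:ℝ) := by exact_mod_cast hp.one_lt
  have hp0 : (0:ℝ) < (p:ℝ) := lt_trans one_pos hp1
  have hpinv0 : 0 < (p:ℝ)⁻¹ := inv_pos.mpr hp0
  have hpinv1 : (p:ℝ)⁻¹ < 1 := by
    rw [inv_lt_one_iff₀]; right; exact hp1
  set a : ℝ := (p:ℝ)⁻¹ ^ (n-1) with ha
  set b : ℝ := (p:ℝ)⁻¹ with hb
  have hn1 : n - 1 ≠ 0 := by omega
  have ha0 : 0 < a := pow_pos hpinv0 _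
  have ha1 : a < 1 := pow_lt_one₀ (le_of_lt hpinv0) hpinv1 hn1
  have hab0 : 0 < a * b := mul_pos ha0 hpinv0
  have hmem : Set.Ioo (0:ℝ) (a*b) ∈ nhdsWithin (0:ℝ) (Set.Ioi 0) :=
    Ioo_mem_nhdsGT_of_mem ⟨le_refl 0, hab0⟩
  obtain _ | m := l
  · simp only [if_pos rfl]
    refine Tendsto.congr' ?_ tendsto_const_nhds
    filter_upwards [hmem] with q hq
    have hcq : (1:ℝ) - a*b/q ≠ 0 := by
      have : 1 < a*b/q := (one_lt_div hq.1).mpr hq.2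
      linarith
    simp [Dq, qPoch, div_self hcq]
  · -- l = m + 1
    set F : ℝ → ℝ := fun q =>
      ((1 - a*b*q^(2*m+1)) * qPoch (a*b) q m * qPoch a q (m+1)) /
        (qPoch q q (m+1) * qPoch b q (m+1) * a^(m+1)) with hF
    have heq : ∀ q ∈ Set.Ioo (0:ℝ) (a*b), F q = Dq q a b (m+1) := by
      intro q hq
      have hq0 : q ≠ 0 := ne_of_gt hq.1
      have hcq : (1:ℝ) - a*b/q ≠ 0 := by
        have : 1 < a*b/q := (one_lt_div hq.1).mpr hq.2
        linarith
      have h1 : qPoch (a*b/q) q (m+1) = (1 - a*b/q) * qPoch (a*b) q m := by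
        rw [qPoch, Finset.prod_range_succ']
        simp only [pow_zero, one_mul]
        rw [mul_comm, qPoch]
        congr 1
        refine Finset.prod_congr rfl fun i _ => ?_
        rw [pow_succ]
        congr 1
        field_simp
      have h2 : a*b*q^(2*(m+1))/q = a*b*q^(2*m+1) := by
        rw [show 2*(m+1) = (2*m+1)+1 by ring, pow_succ]
        field_simp
      rw [Dq, h1, h2]
      rw [show (1 - a*b*q^(2*m+1)) * ((1 - a*b/q) * qPoch (a*b) q m) * qPoch a q (m+1)
          = (1 - a*b/q) * ((1 - a*b*q^(2*m+1)) * qPoch (a*b) q m * qPoch a q (m+1)) by ring,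
        show (1 - a*b/q) * qPoch q q (m+1) * qPoch b q (m+1) * a^(m+1)
          = (1 - a*b/q) * (qPoch q q (m+1) * qPoch b q (m+1) * a^(m+1)) by ring,
        mul_div_mul_left _ _ hcq, hF]
    have hden0 : qPoch 0 0 (m+1) * qPoch b 0 (m+1) * a^(m+1) ≠ 0 := by
      have h1 : qPoch (0:ℝ) 0 (m+1) = 1 := by simp [qPoch]
      rw [h1, one_mul, qPoch_q_zero]
      exact mul_ne_zero (by linarith) (pow_ne_zero _ (ne_of_gt ha0))
    have hnumc : Continuous fun q : ℝ =>
        (1 - a*b*q^(2*m+1)) * qPoch (a*b) q m * qPoch a q (m+1) :=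
      ((continuous_const.sub (continuous_const.mul (continuous_pow _))).mul
        (qPoch_cont _ _)).mul (qPoch_cont _ _)
    have hdenc : Continuous fun q : ℝ => qPoch q q (m+1) * qPoch b q (m+1) * a^(m+1) :=
      ((qPoch_cont' _).mul (qPoch_cont _ _)).mul continuous_const
    have hFt : Tendsto F (nhdsWithin 0 (Set.Ioi 0))
        (nhds (((1 - a*b*(0:ℝ)^(2*m+1)) * qPoch (a*b) 0 m * qPoch a 0 (m+1)) /
          (qPoch 0 0 (m+1) * qPoch b 0 (m+1) * a^(m+1)))) := by
      exact Tendsto.div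
        ((hnumc.tendsto 0).mono_left nhdsWithin_le_nhds)
        ((hdenc.tendsto 0).mono_left nhdsWithin_le_nhds) hden0
    have hval : ((1 - a*b*(0:ℝ)^(2*m+1)) * qPoch (a*b) 0 m * qPoch a 0 (m+1)) /
          (qPoch 0 0 (m+1) * qPoch b 0 (m+1) * a^(m+1))
        = (if m + 1 = 0 then 1
            else if m + 1 = 1 then (1 - a) / (1 - b) * (p : ℝ) ^ (n - 1)
            else (1 - (p:ℝ)⁻¹ ^ n) * (1 - a) / (1 - b) * ((p : ℝ) ^ (n - 1)) ^ (m+1)) := by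
      have hz : (0:ℝ)^(2*m+1) = 0 := zero_pow (by omega)
      have h1 : qPoch (0:ℝ) 0 (m+1) = 1 := by simp [qPoch]
      have hb1 : (1:ℝ) - b ≠ 0 := by linarith
      have hpa : (p:ℝ) ^ (n-1) = a⁻¹ := by rw [ha, inv_pow, inv_inv]
      have hpne : (p:ℝ) ≠ 0 := ne_of_gt hp0
      obtain _ | k := m
      · rw [if_neg (by omega : ¬(0:ℕ)+1 = 0), if_pos rfl, hz, mul_zero, sub_zero,
          show qPoch (a*b) 0 0 = 1 from by simp [qPoch], h1, qPoch_q_zero, qPoch_q_zero, hpa]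
        simp only [one_mul, mul_one, pow_one]
        rw [← div_div, div_eq_mul_inv]
        norm_num
      · rw [if_neg (by omega : ¬(k:ℕ)+1+1 = 0), if_neg (by omega : ¬(k:ℕ)+1+1 = 1)]
        have hab : a * b = (p:ℝ)⁻¹ ^ n := by
          rw [ha, hb, ← pow_succ]
          congr 1
          omega
        rw [hz, mul_zero, sub_zero, h1, qPoch_q_zero, qPoch_q_zero, qPoch_q_zero,
          ← hab, hpa, inv_pow]
        simp only [one_mul, mul_one]
        rw [← div_div, div_eq_mul_inv]
    rw [hval] at hFt
    refine Tendsto.congr' ?_ hFt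
    filter_upwards [hmem] with q hq
    exact heq q hq
end
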